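/- Let r ≥ 1 and N ≥ 0 be integers and let ζ ∈ ℂ be a primitive r-th root of unity. For polynomials b_0, …, b_{r−1} ∈ ℂ[w], the following are equivalent: (i) for every l ∈ {0,…,r−1}, the polynomial Σ_{k=0}^{r−1} ζ^{−lk}·w^k·b_k(w) lies in the ideal (w^N); (ii) for every k ∈ {0,…,r−1}, the coefficient of w^j in b_k vanishes for all j < N − k. In particular, when N ≥ r − 1, the kernel of the ℂ-linear endomorphism of (ℂ[w]/(w^N))^{⊕r} sending (b_k)_{k=0}^{r−1} to (Σ_{k=0}^{r−1} ζ^{−lk}·w^k·b_k)_{l=0}^{r−1} has ℂ-dimension r(r−1)/2. -/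

import Mathlib

open Polynomial

noncomputable section

/-- The ring `ℂ[w]/(w^N)`. -/
def BN (N : ℕ) : Type :=
  Polynomial ℂ ⧸ Ideal.span {(Polynomial.X : Polynomial ℂ) ^ N}

instance (N : ℕ) : CommRing (BN N) :=
  inferInstanceAs (CommRing (Polynomial ℂ ⧸ Ideal.span {(Polynomial.X : Polynomial ℂ) ^ N}))

instance (N : ℕ) : Algebra ℂ (BN N) :=
  inferInstanceAs (Algebra ℂ (Polynomial ℂ ⧸ Ideal.span {(Polynomial.X : Polynomial ℂ) ^ N}))

/-- The class of a polynomial in `ℂ[w]/(w^N)`. -/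
def BN.mk (N : ℕ) (p : Polynomial ℂ) : BN N :=
  (Ideal.Quotient.mk (Ideal.span {(Polynomial.X : Polynomial ℂ) ^ N}) p : _)

/-- The coefficient of `w^j` in the unique polynomial representative of degree `< N` of an
element of `ℂ[w]/(w^N)` (for `j < N`). -/
noncomputable def BN.coeff (N j : ℕ) (b : BN N) : ℂ :=
  ((Quotient.out
      (show Polynomial ℂ ⧸ Ideal.span {(Polynomial.X : Polynomial ℂ) ^ N} from b))
      %ₘ (Polynomial.X ^ N)).coeff j

/-! The matrix `(ζ^{-lk})` is the Vandermonde matrix of the distinct nodes `ζ^{-l}`, so it is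
invertible; comparing coefficients of `w^j` for `j < N`, condition (i) says exactly that every
`w^k b_k` lies in `(w^N)`, i.e. that the first `N - k` coefficients of `b_k` vanish. Hence, reading
elements of `ℂ[w]/(w^N)` through their representatives of degree `< N`, the kernel is cut out of
the `rN`-dimensional space `(ℂ[w]/(w^N))^r` by `∑ₖ (N - k)` independent linear conditions, and has
dimension `∑ₖ k = r(r-1)/2`. -/

theorem Polynomial.X_pow_dvd_X_pow_mul_iff {R : Type*} [CommRing R] [IsDomain R] {N k : ℕ}
    {p : R[X]} : X ^ N ∣ X ^ k * p ↔ ∀ j < N - k, p.coeff j = 0 := by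
  rcases le_or_gt k N with hk | hk
  · rw [← Nat.add_sub_cancel' hk, pow_add, mul_dvd_mul_iff_left (pow_ne_zero _ X_ne_zero),
      X_pow_dvd_iff, Nat.add_sub_cancel_left]
  · simp only [Nat.sub_eq_zero_of_le hk.le, Nat.not_lt_zero, false_imp_iff, implies_true,
      iff_true]
    exact (pow_dvd_pow X hk.le).mul_right p

namespace IsPrimitiveRoot

variable {K : Type*} [Field K] {ζ : K} {r : ℕ}

theorem eq_zero_of_forall_sum_inv_pow_mul_eq_zero (hζ : IsPrimitiveRoot ζ r) {v : Fin r → K}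
    (hv : ∀ l : Fin r, ∑ k : Fin r, (ζ ^ ((l : ℕ) * (k : ℕ)))⁻¹ * v k = 0) : v = 0 := by
  refine Matrix.eq_zero_of_forall_index_sum_pow_mul_eq_zero (f := fun l : Fin r => ζ⁻¹ ^ (l : ℕ))
    (fun l l' h => Fin.ext (hζ.inv.pow_inj l.isLt l'.isLt h)) fun l => ?_
  simpa only [inv_pow, ← pow_mul] using hv l

theorem forall_sum_C_inv_pow_mul_mem_span_X_pow_iff (hζ : IsPrimitiveRoot ζ r) (N : ℕ)
    (p : Fin r → K[X]) :
    (∀ l : Fin r, ∑ k : Fin r, C (ζ ^ ((l : ℕ) * (k : ℕ)))⁻¹ * p k ∈ Ideal.span {X ^ N}) ↔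
      ∀ k, p k ∈ Ideal.span {X ^ N} := by
  simp only [Ideal.mem_span_singleton, X_pow_dvd_iff, finsetSum_coeff, coeff_C_mul]
  refine ⟨fun h k j hj => ?_, fun h l j hj => by simp [h _ j hj]⟩
  exact congrFun (hζ.eq_zero_of_forall_sum_inv_pow_mul_eq_zero fun l => h l j hj) k

theorem forall_sum_C_inv_pow_mul_X_pow_mul_mem_span_X_pow_iff (hζ : IsPrimitiveRoot ζ r)
    (N : ℕ) (b : Fin r → K[X]) :
    (∀ l : Fin r, ∑ k : Fin r, C (ζ ^ ((l : ℕ) * (k : ℕ)))⁻¹ * X ^ (k : ℕ) * b k ∈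
        Ideal.span {X ^ N}) ↔
      ∀ k : Fin r, ∀ j < N - k, (b k).coeff j = 0 := by
  simp_rw [mul_assoc]
  rw [hζ.forall_sum_C_inv_pow_mul_mem_span_X_pow_iff]
  simp only [Ideal.mem_span_singleton, X_pow_dvd_X_pow_mul_iff]

end IsPrimitiveRoot

namespace BN

instance (N : ℕ) : Module.Finite ℂ (BN N) := (AdjoinRoot.powerBasis' (monic_X_pow N)).finite

theorem finrank_eq (N : ℕ) : Module.finrank ℂ (BN N) = N :=
  (AdjoinRoot.powerBasis' (monic_X_pow N)).finrank.trans (natDegree_X_pow N)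

def lowCoeffs (N n : ℕ) : BN N →ₗ[ℂ] (Fin n → ℂ) :=
  LinearMap.pi fun j => lcoeff ℂ j ∘ₗ AdjoinRoot.modByMonicHom (monic_X_pow N)

theorem lowCoeffs_surjective {N n : ℕ} (hn : n ≤ N) : Function.Surjective (lowCoeffs N n) := by
  intro v
  let p : degreeLT ℂ n := (degreeLTEquiv ℂ n).symm v
  refine ⟨BN.mk N p, funext fun j => ?_⟩
  have hp : (p : ℂ[X]).degree < (X ^ N : ℂ[X]).degree := by
    rw [degree_X_pow]
    exact (mem_degreeLT.mp p.2).trans_le (by exact_mod_cast hn)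
  change (AdjoinRoot.modByMonicHom (monic_X_pow N) (AdjoinRoot.mk _ (p : ℂ[X]))).coeff j = v j
  rw [AdjoinRoot.modByMonicHom_mk, (modByMonic_eq_self_iff (monic_X_pow N)).mpr hp]
  exact congrFun ((degreeLTEquiv ℂ n).apply_symm_apply v) j

theorem finrank_ker_piMap_lowCoeffs {ι : Type*} [Fintype ι] {N : ℕ} (n : ι → ℕ)
    (hn : ∀ i, n i ≤ N) :
    Module.finrank ℂ (LinearMap.ker (LinearMap.piMap fun i => lowCoeffs N (n i))) =
      ∑ i, (N - n i) := by
  have hsurj := Function.Surjective.piMap fun i => lowCoeffs_surjective (hn i)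
  have := (LinearMap.piMap fun i => lowCoeffs N (n i)).finrank_range_add_finrank_ker
  rw [LinearMap.range_eq_top.mpr hsurj, finrank_top, Module.finrank_pi_fintype,
    Module.finrank_pi_fintype] at this
  simp only [Module.finrank_fin_fun, finrank_eq] at this
  rw [Finset.sum_tsub_distrib _ fun i _ => hn i]
  omega

theorem ker_eq_ker_piMap_lowCoeffs {r N : ℕ} {ζ : ℂ} (hζ : IsPrimitiveRoot ζ r)
    (F : (Fin r → BN N) →ₗ[ℂ] (Fin r → BN N))
    (hF : ∀ (c : Fin r → BN N) (l : Fin r),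
      F c l = ∑ k : Fin r, BN.mk N (C (ζ ^ ((l : ℕ) * (k : ℕ)))⁻¹ * X ^ (k : ℕ)) * c k) :
    LinearMap.ker F = LinearMap.ker (LinearMap.piMap fun k : Fin r => lowCoeffs N (N - k)) := by
  ext c
  let b k : ℂ[X] := AdjoinRoot.modByMonicHom (monic_X_pow N) (c k)
  have hFc : ∀ l, F c l =
      BN.mk N (∑ k : Fin r, C (ζ ^ ((l : ℕ) * (k : ℕ)))⁻¹ * X ^ (k : ℕ) * b k) := by
    intro l
    simp only [hF, BN.mk, map_sum, map_mul]
    exact Finset.sum_congr rfl fun k _ => congrArg _ (AdjoinRoot.mk_leftInverse _ (c k)).symm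
  simp only [LinearMap.mem_ker]
  calc F c = 0 ↔ ∀ l, F c l = 0 := funext_iff
    _ ↔ ∀ l : Fin r, ∑ k : Fin r, C (ζ ^ ((l : ℕ) * (k : ℕ)))⁻¹ * X ^ (k : ℕ) * b k ∈
        Ideal.span {X ^ N} := by
      simp only [hFc]
      exact forall_congr' fun l => Ideal.Quotient.eq_zero_iff_mem
    _ ↔ ∀ k : Fin r, ∀ j < N - k, (b k).coeff j = 0 :=
      hζ.forall_sum_C_inv_pow_mul_X_pow_mul_mem_span_X_pow_iff N b
    _ ↔ _ := by
      simp only [funext_iff, LinearMap.coe_piMap, Pi.map_apply, Pi.zero_apply, Fin.forall_iff]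
      rfl

end BN

theorem statement7_general (r N : ℕ) (ζ : ℂ) (hζ : IsPrimitiveRoot ζ r) :
    (∀ b : Fin r → Polynomial ℂ,
      (∀ l : Fin r,
        (∑ k : Fin r, Polynomial.C ((ζ ^ ((l : ℕ) * (k : ℕ)))⁻¹)
            * Polynomial.X ^ (k : ℕ) * b k) ∈
          Ideal.span {(Polynomial.X : Polynomial ℂ) ^ N})
      ↔ (∀ k : Fin r, ∀ j : ℕ, j < N - (k : ℕ) → (b k).coeff j = 0))
    ∧ (r - 1 ≤ N →
      ∀ F : (Fin r → BN N) →ₗ[ℂ] (Fin r → BN N),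
        (∀ (c : Fin r → BN N) (l : Fin r),
          F c l = ∑ k : Fin r,
            BN.mk N (Polynomial.C ((ζ ^ ((l : ℕ) * (k : ℕ)))⁻¹)
              * Polynomial.X ^ (k : ℕ)) * c k) →
        Module.finrank ℂ (LinearMap.ker F) = r * (r - 1) / 2) := by
  refine ⟨hζ.forall_sum_C_inv_pow_mul_X_pow_mul_mem_span_X_pow_iff N, fun hN F hF => ?_⟩
  have hk : ∀ k : Fin r, (k : ℕ) ≤ N := fun k => by omega
  rw [BN.ker_eq_ker_piMap_lowCoeffs hζ F hF,
    BN.finrank_ker_piMap_lowCoeffs _ fun k : Fin r => Nat.sub_le N k]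
  simp only [Nat.sub_sub_self (hk _)]
  rw [Fin.sum_univ_eq_sum_range (fun k => k) r, Finset.sum_range_id]

/-- Let `r ≥ 1`, `N ≥ 0`, and let `ζ ∈ ℂ` be a primitive `r`-th root of
unity.  For polynomials `b₀, …, b_{r−1} ∈ ℂ[w]`: the sums `Σₖ ζ^{−lk} wᵏ bₖ(w)` lie in
`(w^N)` for all `0 ≤ l ≤ r−1` iff the coefficient of `w^j` in `bₖ` vanishes for all
`j < N − k`.  In particular, if `N ≥ r − 1`, the kernel of the `ℂ`-linear endomorphism of
`(ℂ[w]/(w^N))^{⊕r}` sending `(bₖ)ₖ` to `(Σₖ ζ^{−lk} wᵏ bₖ)ₗ` has `ℂ`-dimension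
`r(r−1)/2`. -/
theorem statement7 (r N : ℕ) (hr : 1 ≤ r) (ζ : ℂ) (hζ : IsPrimitiveRoot ζ r) :
    (∀ b : Fin r → Polynomial ℂ,
      (∀ l : Fin r,
        (∑ k : Fin r, Polynomial.C ((ζ ^ ((l : ℕ) * (k : ℕ)))⁻¹)
            * Polynomial.X ^ (k : ℕ) * b k) ∈
          Ideal.span {(Polynomial.X : Polynomial ℂ) ^ N})
      ↔ (∀ k : Fin r, ∀ j : ℕ, j < N - (k : ℕ) → (b k).coeff j = 0))
    ∧ (r - 1 ≤ N →
      ∀ F : (Fin r → BN N) →ₗ[ℂ] (Fin r → BN N),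
        (∀ (c : Fin r → BN N) (l : Fin r),
          F c l = ∑ k : Fin r,
            BN.mk N (Polynomial.C ((ζ ^ ((l : ℕ) * (k : ℕ)))⁻¹)
              * Polynomial.X ^ (k : ℕ)) * c k) →
        Module.finrank ℂ (LinearMap.ker F) = r * (r - 1) / 2) :=
  statement7_general r N ζ hζ

end
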